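/- Let (X,d) be a metric space, C_b(X) the Banach space of bounded continuous real-valued functions on X with the supremum norm, and Γ : C_b(X) → ℝ a pressure function. For every continuous linear functional L on C_b(X) that is positive (L(ψ) ≥ 0 whenever ψ ≥ 0) and normalized (L(1) = 1), set 𝔥(L) = inf { L(φ) : φ ∈ C_b(X), Γ(−φ) ≤ 0 }. Then for every φ ∈ C_b(X) the supremum of 𝔥(L) + L(φ) over all positive normalized continuous linear functionals L on C_b(X) is attained, and Γ(φ) = max_L { 𝔥(L) + L(φ) }. -/

import Mathlib

open MeasureTheory BoundedContinuousFunction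

/-- A pressure function on the bounded continuous functions `C_b(X)` of a metric space:
monotone, translation invariant and convex. -/
def IsPressureFunctionCb {X : Type*} [MetricSpace X] (Γ : (X →ᵇ ℝ) → ℝ) : Prop :=
  (∀ φ ψ : X →ᵇ ℝ, (∀ x, φ x ≤ ψ x) → Γ φ ≤ Γ ψ) ∧
  (∀ (φ : X →ᵇ ℝ) (c : ℝ), Γ (φ + BoundedContinuousFunction.const X c) = Γ φ + c) ∧
  ConvexOn ℝ Set.univ Γ

/-- A positive normalized continuous linear functional on `C_b(X)`; these correspond to
regular finitely additive probability measures on the Borel σ-algebra of `X`. -/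
def IsPosNormalized {X : Type*} [MetricSpace X] (L : (X →ᵇ ℝ) →L[ℝ] ℝ) : Prop :=
  (∀ ψ : X →ᵇ ℝ, (∀ x, 0 ≤ ψ x) → 0 ≤ L ψ) ∧ L 1 = 1

/-- The entropy-like value of a positive normalized functional:
`𝔥(L) = inf { L(φ) : φ ∈ C_b(X), Γ(−φ) ≤ 0 }`, valued in `EReal`. -/
noncomputable def entropyLikeCb {X : Type*} [MetricSpace X]
    (Γ : (X →ᵇ ℝ) → ℝ) (L : (X →ᵇ ℝ) →L[ℝ] ℝ) : EReal :=
  sInf { r : EReal | ∃ φ : X →ᵇ ℝ, Γ (-φ) ≤ 0 ∧ r = ((L φ : ℝ) : EReal) }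

/-! A pressure function is convex and 1-Lipschitz, so Hahn–Banach gives it a continuous
subgradient `L` at `φ`, and monotonicity and translation invariance force `L` to be positive and
normalized. For any normalized `L'` the test function `Γ φ - φ` shows `𝔥(L') ≤ Γ φ - L' φ`; for
the subgradient, `Γ (-ψ) ≤ 0` gives `L ψ ≥ Γ φ - L φ`, so the bound is attained at `L`. -/

theorem ConvexOn.exists_subgradient_of_continuous {E : Type*} [TopologicalSpace E]
    [AddCommGroup E] [IsTopologicalAddGroup E] [Module ℝ E] [ContinuousSMul ℝ E] {f : E → ℝ}
    (hf : ConvexOn ℝ Set.univ f) (hcont : Continuous f) (x : E) :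
    ∃ g : StrongDual ℝ E, ∀ y, f x + g (y - x) ≤ f y := by
  -- Separate `(x, f x)` from the open convex strict epigraph of `f`.
  have hopen : IsOpen {p : E × ℝ | p.1 ∈ Set.univ ∧ f p.1 < p.2} := by
    simpa only [Set.mem_univ, true_and] using
      isOpen_lt (f := fun p : E × ℝ => f p.1) (by fun_prop) continuous_snd
  obtain ⟨ℓ, hℓ⟩ := geometric_hahn_banach_point_open hf.convex_strict_epigraph hopen
    (x := (x, f x)) (by simp)
  set c := ℓ (0, 1)
  have hℓ_apply : ∀ y t, ℓ (y, t) = ℓ (y, 0) + t * c := fun y t => by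
    have : (y, t) = (y, 0) + t • ((0 : E), (1 : ℝ)) := by simp
    rw [this, map_add, map_smul, smul_eq_mul]
  have hlt : ∀ y t, f y < t → ℓ (x, 0) + f x * c < ℓ (y, 0) + t * c := fun y t h => by
    have := hℓ (y, t) ⟨trivial, h⟩
    rwa [hℓ_apply x, hℓ_apply y] at this
  have hc : 0 < c := by linarith [hlt x (f x + 1) (lt_add_one _)]
  refine ⟨-c⁻¹ • ℓ.comp (ContinuousLinearMap.inl ℝ E ℝ), fun y => ?_⟩
  refine le_of_forall_gt_imp_ge_of_dense fun t ht => ?_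
  have key : c⁻¹ * (ℓ (x, 0) - ℓ (y, 0)) < t - f x := by
    rw [inv_mul_lt_iff₀ hc]; linarith [hlt y t ht]
  have hsub : ℓ (y - x, 0) = ℓ (y, 0) - ℓ (x, 0) := by
    rw [← map_sub, Prod.mk_sub_mk, sub_zero]
  simp only [_root_.smul_apply, ContinuousLinearMap.comp_apply,
    ContinuousLinearMap.inl_apply, hsub, smul_eq_mul]
  linarith

theorem BoundedContinuousFunction.const_eq_smul_one {α : Type*} [TopologicalSpace α] (c : ℝ) :
    const α c = c • (1 : α →ᵇ ℝ) := by
  ext; simp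

namespace IsPressureFunctionCb

variable {X : Type*} [MetricSpace X] {Γ : (X →ᵇ ℝ) → ℝ}

theorem le_add_dist (hΓ : IsPressureFunctionCb Γ) (φ ψ : X →ᵇ ℝ) :
    Γ φ ≤ Γ ψ + dist φ ψ := by
  rw [← hΓ.2.1]
  refine hΓ.1 _ _ fun x => ?_
  have := (le_abs_self _).trans (dist_coe_le_dist (f := φ) (g := ψ) x)
  simp only [coe_add, Pi.add_apply, const_apply]
  linarith

theorem lipschitzWith_one (hΓ : IsPressureFunctionCb Γ) : LipschitzWith 1 Γ :=
  .of_le_add hΓ.le_add_dist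

theorem isPosNormalized_of_subgradient (hΓ : IsPressureFunctionCb Γ) {φ : X →ᵇ ℝ}
    {L : (X →ᵇ ℝ) →L[ℝ] ℝ} (hL : ∀ χ, Γ φ + L (χ - φ) ≤ Γ χ) : IsPosNormalized L := by
  have hconst : ∀ c : ℝ, Γ φ + c * L 1 ≤ Γ φ + c := fun c => by
    have := hL (φ + const X c)
    rwa [hΓ.2.1, add_sub_cancel_left, const_eq_smul_one, L.map_smul, smul_eq_mul] at this
  refine ⟨fun ψ hψ => ?_, ?_⟩
  · have hmono : Γ (φ - ψ) ≤ Γ φ := hΓ.1 _ _ fun x => by simpa using hψ x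
    have := hL (φ - ψ)
    rw [sub_sub_cancel_left, map_neg] at this
    linarith
  · linarith [hconst 1, hconst (-1)]

theorem entropyLikeCb_add_le (hΓ : IsPressureFunctionCb Γ) {L : (X →ᵇ ℝ) →L[ℝ] ℝ}
    (hL : L 1 = 1) (φ : X →ᵇ ℝ) :
    entropyLikeCb Γ L + ((L φ : ℝ) : EReal) ≤ (Γ φ : EReal) := by
  have hmem : Γ (-(const X (Γ φ) - φ)) ≤ 0 := by
    have : -(const X (Γ φ) - φ) = φ + const X (-Γ φ) := by ext; simp [sub_eq_add_neg, add_comm]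
    rw [this, hΓ.2.1, add_neg_cancel]
  have hle : entropyLikeCb Γ L ≤ ((Γ φ - L φ : ℝ) : EReal) := by
    refine sInf_le ⟨_, hmem, ?_⟩
    rw [map_sub, const_eq_smul_one, L.map_smul, hL, smul_eq_mul, mul_one]
  calc entropyLikeCb Γ L + ((L φ : ℝ) : EReal)
      ≤ ((Γ φ - L φ : ℝ) : EReal) + ((L φ : ℝ) : EReal) := by gcongr
    _ = (Γ φ : EReal) := by rw [← EReal.coe_add, sub_add_cancel]

end IsPressureFunctionCb

theorem le_entropyLikeCb_add_of_subgradient {X : Type*} [MetricSpace X] {Γ : (X →ᵇ ℝ) → ℝ}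
    {φ : X →ᵇ ℝ} {L : (X →ᵇ ℝ) →L[ℝ] ℝ} (hL : ∀ χ, Γ φ + L (χ - φ) ≤ Γ χ) :
    (Γ φ : EReal) ≤ entropyLikeCb Γ L + ((L φ : ℝ) : EReal) := by
  have hle : ((Γ φ - L φ : ℝ) : EReal) ≤ entropyLikeCb Γ L := by
    refine le_sInf ?_
    rintro _ ⟨ψ, hψ, rfl⟩
    have := hL (-ψ)
    rw [map_sub, map_neg] at this
    exact EReal.coe_le_coe_iff.2 (by linarith)
  calc (Γ φ : EReal) = ((Γ φ - L φ : ℝ) : EReal) + ((L φ : ℝ) : EReal) := by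
        rw [← EReal.coe_add, sub_add_cancel]
    _ ≤ entropyLikeCb Γ L + ((L φ : ℝ) : EReal) := by gcongr

theorem pressure_variational_principle_Cb_general {X : Type*} [MetricSpace X]
    (Γ : (X →ᵇ ℝ) → ℝ) (hΓ : IsPressureFunctionCb Γ) (φ : X →ᵇ ℝ) :
    ∃ L : (X →ᵇ ℝ) →L[ℝ] ℝ, IsPosNormalized L ∧
      entropyLikeCb Γ L + ((L φ : ℝ) : EReal) = (Γ φ : EReal) ∧
      ∀ L' : (X →ᵇ ℝ) →L[ℝ] ℝ, IsPosNormalized L' →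
        entropyLikeCb Γ L' + ((L' φ : ℝ) : EReal) ≤ (Γ φ : EReal) := by
  obtain ⟨L, hL⟩ := hΓ.2.2.exists_subgradient_of_continuous hΓ.lipschitzWith_one.continuous φ
  have hLpos := hΓ.isPosNormalized_of_subgradient hL
  exact ⟨L, hLpos, (hΓ.entropyLikeCb_add_le hLpos.2 φ).antisymm
    (le_entropyLikeCb_add_of_subgradient hL), fun L' hL' => hΓ.entropyLikeCb_add_le hL'.2 φ⟩

/-- Variational principle over finitely additive probability measures
(positive normalized continuous linear functionals on `C_b(X)`): the supremum of
`𝔥(L) + L(φ)` is attained and equals `Γ(φ)`. -/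
theorem pressure_variational_principle_Cb {X : Type*} [MetricSpace X] [Nonempty X]
    (Γ : (X →ᵇ ℝ) → ℝ) (hΓ : IsPressureFunctionCb Γ) (φ : X →ᵇ ℝ) :
    ∃ L : (X →ᵇ ℝ) →L[ℝ] ℝ, IsPosNormalized L ∧
      entropyLikeCb Γ L + ((L φ : ℝ) : EReal) = (Γ φ : EReal) ∧
      ∀ L' : (X →ᵇ ℝ) →L[ℝ] ℝ, IsPosNormalized L' →
        entropyLikeCb Γ L' + ((L' φ : ℝ) : EReal) ≤ (Γ φ : EReal) :=
  pressure_variational_principle_Cb_general Γ hΓ φ
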